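/- arXiv:1403.6053 — 3 statements merged into one kernel-verified Lean document; each statement's English description precedes it below -/
import Mathlib

section
/- Let S be a finite group with subgroups Q, P. The inverse Möb of the table of marks of S has entries Möb_{[Q],[P]} = (1/|W_S Q|) · Σ_{P' ∼_S P} μ(Q,P'), where μ is the Möbius function of the subgroup lattice of S, W_S Q = N_S(Q)/Q, and the sum is over all subgroups P' of S conjugate to P. -/
open Classical

open Pointwise

/-- The set of `S`-conjugacy classes of subgroups of `S`. -/
def SubgroupClasses (S : Type*) [Group S] :=
  Quotient (MulAction.orbitRel (ConjAct S) (Subgroup S))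

/-!
Let `ζ` be the zeta matrix of the subgroup lattice, `I` the matrix sending a subgroup to its
conjugacy class and `R` the matrix picking the representative `Quotient.out c` of a class `c`.
By orbit–stabilizer, `|{s : sQs⁻¹ ≤ P}| = |N_S(P)| · #{P' ∼ P : Q ≤ P'}`, so the table of marks
is `R ζ I D` with `D = diag |W_S P|`, while the claimed inverse is `D⁻¹ R μ I`. As the inverse of
the conjugation-invariant matrix `ζ`, `μ` is conjugation-invariant, so the rows of `μ I` are class
functions and `I R (μ I) = μ I`. Hence the product is `R ζ μ I = R I = 1`.
-/

open Matrix MulAction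

namespace Matrix

variable {l m n α : Type*}

theorem one_submatrix_id_mul [Fintype m] [DecidableEq m] [NonAssocSemiring α] (r : l → m)
    (M : Matrix m n α) : (1 : Matrix m m α).submatrix r id * M = M.submatrix r id := by
  simpa using one_submatrix_mul r (Equiv.refl m) M

theorem one_submatrix_mul_one_submatrix [Fintype m] [DecidableEq m] [DecidableEq l]
    [NonAssocSemiring α] {r : l → m} {q : m → l} (h : Function.LeftInverse q r) :
    (1 : Matrix m m α).submatrix r id * (1 : Matrix l l α).submatrix q id = 1 := by
  rw [one_submatrix_id_mul, submatrix_submatrix, h.comp_eq_id]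
  rfl

theorem one_submatrix_mul_one_submatrix_mul [Fintype m] [DecidableEq m] [Fintype l]
    [DecidableEq l] [NonAssocSemiring α] {r : l → m} {q : m → l} {N : Matrix m n α}
    (hN : ∀ x, N (r (q x)) = N x) :
    (1 : Matrix l l α).submatrix q id * ((1 : Matrix m m α).submatrix r id * N) = N := by
  rw [one_submatrix_id_mul, one_submatrix_id_mul, submatrix_submatrix]
  ext x j
  exact congrFun (hN x) j

theorem submatrix_eq_self_of_mul_eq_one [Fintype n] [DecidableEq n] [Semiring α]
    {A B : Matrix n n α} (e : n ≃ n) (hA : A.submatrix e e = A) (hBA : B * A = 1)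
    (hAB : A * B = 1) : B.submatrix e e = B := by
  refine left_inv_eq_right_inv ?_ hAB
  conv_lhs => rw [← hA]
  rw [submatrix_mul_equiv, hBA, submatrix_one_equiv]

end Matrix

theorem MulAction.mul_apply_smul {G X n α : Type*} [Group G] [MulAction G X] [Fintype X]
    [NonUnitalNonAssocSemiring α] {M : Matrix X X α} {N : Matrix X n α}
    (hM : ∀ (g : G) x y, M (g • x) (g • y) = M x y) (hN : ∀ (g : G) y j, N (g • y) j = N y j)
    (g : G) (x : X) (j : n) : (M * N) (g • x) j = (M * N) x j := by
  simp only [mul_apply]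
  exact (Fintype.sum_equiv (toPerm g) _ _ fun y => by simp [hM, hN]).symm

theorem MulAction.card_setOf_smul (G : Type*) {X : Type*} [Group G] [MulAction G X] (x : X)
    (p : X → Prop) :
    Nat.card {g : G | p (g • x)} =
      Nat.card (stabilizer G x) * Nat.card {y | y ∈ orbit G x ∧ p y} := by
  change Nat.card (QuotientGroup.mk ⁻¹' {q | p (ofQuotientStabilizer G x q)}) = _
  rw [QuotientGroup.card_preimage_mk]
  exact congrArg _ <| Nat.card_congr <|
    ((orbitEquivQuotientStabilizer G x).symm.subtypeEquiv fun _ => Iff.rfl).trans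
      (Equiv.subtypeSubtypeEquivSubtypeInter _ p)

namespace Subgroup

variable {S : Type*} [Group S]

noncomputable def weylCard (P : Subgroup S) : ℕ :=
  Nat.card (normalizer (P : Set S) ⧸ P.subgroupOf (normalizer (P : Set S)))

theorem card_stabilizer_conjAct (P : Subgroup S) :
    Nat.card (stabilizer (ConjAct S) P) = Nat.card (normalizer (P : Set S)) :=
  Nat.card_congr <| ConjAct.ofConjAct.toEquiv.subtypeEquiv fun g => by
    rw [mem_stabilizer_iff, ← conjAct_pointwise_smul_iff]; rfl

theorem card_normalizer_eq_weylCard_mul_card (P : Subgroup S) :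
    Nat.card (normalizer (P : Set S)) = P.weylCard * Nat.card P := by
  rw [card_eq_card_quotient_mul_card_subgroup (P.subgroupOf _),
    Nat.card_congr (subgroupOfEquivOfLe le_normalizer).toEquiv, weylCard]

theorem card_setOf_conj_mem (Q P : Subgroup S) :
    Nat.card {s : S | ∀ q ∈ Q, s * q * s⁻¹ ∈ P} =
      Nat.card (normalizer (P : Set S)) * Nat.card {P' | P' ∈ orbit (ConjAct S) P ∧ Q ≤ P'} := by
  rw [← card_stabilizer_conjAct, ← card_setOf_smul]
  refine Nat.card_congr <| ((Equiv.inv S).trans ConjAct.toConjAct.toEquiv).subtypeEquiv fun s => ?_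
  simp [SetLike.le_def, mem_pointwise_smul_iff_inv_smul_mem, ConjAct.toConjAct_smul]

theorem exists_map_conj_eq_iff_mem_orbit (P P' : Subgroup S) :
    (∃ s : S, P.map (MulAut.conj s).toMonoidHom = P') ↔ P' ∈ orbit (ConjAct S) P :=
  ⟨fun ⟨s, h⟩ => ⟨ConjAct.toConjAct s, h⟩, fun ⟨g, h⟩ => ⟨ConjAct.ofConjAct g, h⟩⟩

end Subgroup

namespace SubgroupClasses

variable {S : Type*} [Group S]

def mk (P : Subgroup S) : SubgroupClasses S :=
  Quotient.mk _ P

theorem mk_out (c : SubgroupClasses S) : mk (Quotient.out c) = c :=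
  Quotient.out_eq c

theorem mk_eq_iff_mem_orbit (P : Subgroup S) (c : SubgroupClasses S) :
    mk P = c ↔ P ∈ orbit (ConjAct S) (Quotient.out c) :=
  Quotient.mk_eq_iff_out.trans orbitRel_apply

theorem mk_smul (g : ConjAct S) (P : Subgroup S) : mk (g • P) = mk P :=
  Quotient.sound (mem_orbit P g)

theorem out_mk_mem_orbit (P : Subgroup S) : Quotient.out (mk P) ∈ orbit (ConjAct S) P :=
  Quotient.mk_out (s := orbitRel (ConjAct S) (Subgroup S)) P

end SubgroupClasses

noncomputable def subgroupZeta (S : Type*) [Group S] : Matrix (Subgroup S) (Subgroup S) ℚ :=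
  .of fun A B => if A ≤ B then 1 else 0

section

variable {S : Type*} [Group S] [Fintype S]

theorem inverse_subgroupZeta_apply_smul_smul {μ : Matrix (Subgroup S) (Subgroup S) ℚ}
    (hζμ : subgroupZeta S * μ = 1) (hμζ : μ * subgroupZeta S = 1) (g : ConjAct S)
    (Q P : Subgroup S) :
    μ (g • Q) (g • P) = μ Q P := by
  have hζ : (subgroupZeta S).submatrix (toPerm g) (toPerm g) = subgroupZeta S := by
    ext A B
    simp [subgroupZeta, Subgroup.pointwise_smul_le_pointwise_smul_iff]
  exact congrFun₂ (submatrix_eq_self_of_mul_eq_one (toPerm g) hζ hμζ hζμ) Q P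

theorem inverse_subgroupZeta_mul_classIndicator_out_mk [DecidableEq (SubgroupClasses S)]
    {μ : Matrix (Subgroup S) (Subgroup S) ℚ} (hζμ : subgroupZeta S * μ = 1)
    (hμζ : μ * subgroupZeta S = 1) (P : Subgroup S) :
    (μ * (1 : Matrix (SubgroupClasses S) (SubgroupClasses S) ℚ).submatrix SubgroupClasses.mk id)
        (Quotient.out (SubgroupClasses.mk P)) =
      (μ * (1 : Matrix (SubgroupClasses S) (SubgroupClasses S) ℚ).submatrix
        SubgroupClasses.mk id) P := by
  obtain ⟨g, hg⟩ := SubgroupClasses.out_mk_mem_orbit P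
  rw [← hg]
  funext d
  refine mul_apply_smul (G := ConjAct S) (inverse_subgroupZeta_apply_smul_smul hζμ hμζ)
    (fun g P' d => ?_) g P d
  exact congrArg (fun c => (1 : Matrix (SubgroupClasses S) _ ℚ) c d) (SubgroupClasses.mk_smul g P')

variable [Fintype (SubgroupClasses S)] [DecidableEq (SubgroupClasses S)]

theorem tableOfMarks_eq_factorization :
    Matrix.of (fun c d : SubgroupClasses S =>
        ((Nat.card {s : S | ∀ q ∈ (Quotient.out c : Subgroup S),
            s * q * s⁻¹ ∈ (Quotient.out d : Subgroup S)}
          / Nat.card (Quotient.out d : Subgroup S) : ℕ) : ℚ)) =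
      (1 : Matrix (Subgroup S) (Subgroup S) ℚ).submatrix
          (fun c : SubgroupClasses S => Quotient.out c) id * subgroupZeta S *
        (1 : Matrix (SubgroupClasses S) (SubgroupClasses S) ℚ).submatrix
          SubgroupClasses.mk id *
        diagonal fun d : SubgroupClasses S => ((Quotient.out d : Subgroup S).weylCard : ℚ) := by
  ext c d
  rw [of_apply, mul_diagonal, Matrix.mul_assoc, one_submatrix_id_mul, submatrix_apply, id,
    Subgroup.card_setOf_conj_mem, Subgroup.card_normalizer_eq_weylCard_mul_card, mul_right_comm,
    Nat.mul_div_cancel _ Nat.card_pos, Nat.cast_mul, mul_comm, mul_apply]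
  congr 1
  rw [Nat.card_eq_fintype_card, Fintype.card_subtype]
  simp [subgroupZeta, one_apply, ← ite_and, Finset.sum_boole, SubgroupClasses.mk_eq_iff_mem_orbit,
    and_comm]

theorem mobiusClassMatrix_eq_factorization (μ : Subgroup S → Subgroup S → ℚ) :
    Matrix.of (fun c d : SubgroupClasses S =>
        (1 / (Nat.card (↥(Subgroup.normalizer ((Quotient.out c : Subgroup S) : Set S)) ⧸
            (Quotient.out c : Subgroup S).subgroupOf
              (Subgroup.normalizer ((Quotient.out c : Subgroup S) : Set S))) : ℚ)) *
          ∑ᶠ P' : Subgroup S,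
            if ∃ s : S, (Quotient.out d : Subgroup S).map (MulAut.conj s).toMonoidHom = P'
            then μ (Quotient.out c) P' else 0) =
      diagonal (fun c : SubgroupClasses S => ((Quotient.out c : Subgroup S).weylCard : ℚ)⁻¹) *
        ((1 : Matrix (Subgroup S) (Subgroup S) ℚ).submatrix
          (fun c : SubgroupClasses S => Quotient.out c) id *
        (Matrix.of μ *
          (1 : Matrix (SubgroupClasses S) (SubgroupClasses S) ℚ).submatrix
            SubgroupClasses.mk id)) := by
  ext c d
  rw [of_apply, diagonal_mul, one_submatrix_id_mul, submatrix_apply, id, one_div, mul_apply,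
    finsum_eq_sum_of_fintype]
  congr 1
  refine Finset.sum_congr rfl fun P' _ => ?_
  simp only [of_apply, submatrix_apply, id, one_apply, mul_ite, mul_one, mul_zero,
    SubgroupClasses.mk_eq_iff_mem_orbit]
  exact if_congr (Subgroup.exists_map_conj_eq_iff_mem_orbit _ _) rfl rfl

end

/-- The inverse of the table of marks of `S` has entries
`Möb_{[Q],[P]} = (1/|W_S Q|) · Σ_{P' ∼_S P} μ(Q,P')`, where `μ` is the Möbius
function of the subgroup lattice of `S`. -/
theorem stmt_10 (S : Type*) [Group S] [Fintype S]
    [Fintype (SubgroupClasses S)] [DecidableEq (SubgroupClasses S)]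
    (μ : Subgroup S → Subgroup S → ℚ)
    (hζμ : ∀ Q P : Subgroup S,
      ∑ᶠ R : Subgroup S, (if Q ≤ R then (1 : ℚ) else 0) * μ R P
        = if Q = P then 1 else 0)
    (hμζ : ∀ Q P : Subgroup S,
      ∑ᶠ R : Subgroup S, μ Q R * (if R ≤ P then (1 : ℚ) else 0)
        = if Q = P then 1 else 0) :
    Matrix.of (fun c d : SubgroupClasses S =>
        ((Nat.card {s : S | ∀ q ∈ (Quotient.out c : Subgroup S),
            s * q * s⁻¹ ∈ (Quotient.out d : Subgroup S)}
          / Nat.card (Quotient.out d : Subgroup S) : ℕ) : ℚ)) *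
      Matrix.of (fun c d : SubgroupClasses S =>
        (1 / (Nat.card (↥(Subgroup.normalizer ((Quotient.out c : Subgroup S) : Set S)) ⧸
            (Quotient.out c : Subgroup S).subgroupOf
              (Subgroup.normalizer ((Quotient.out c : Subgroup S) : Set S))) : ℚ)) *
          ∑ᶠ P' : Subgroup S,
            if ∃ s : S, (Quotient.out d : Subgroup S).map (MulAut.conj s).toMonoidHom = P'
            then μ (Quotient.out c) P' else 0) = 1
    ∧ Matrix.of (fun c d : SubgroupClasses S =>
        (1 / (Nat.card (↥(Subgroup.normalizer ((Quotient.out c : Subgroup S) : Set S)) ⧸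
            (Quotient.out c : Subgroup S).subgroupOf
              (Subgroup.normalizer ((Quotient.out c : Subgroup S) : Set S))) : ℚ)) *
          ∑ᶠ P' : Subgroup S,
            if ∃ s : S, (Quotient.out d : Subgroup S).map (MulAut.conj s).toMonoidHom = P'
            then μ (Quotient.out c) P' else 0) *
      Matrix.of (fun c d : SubgroupClasses S =>
        ((Nat.card {s : S | ∀ q ∈ (Quotient.out c : Subgroup S),
            s * q * s⁻¹ ∈ (Quotient.out d : Subgroup S)}
          / Nat.card (Quotient.out d : Subgroup S) : ℕ) : ℚ)) = 1 := by
  have hζμ' : subgroupZeta S * Matrix.of μ = 1 := by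
    ext Q P
    rw [mul_apply, one_apply, ← finsum_eq_sum_of_fintype]
    exact hζμ Q P
  have hμζ' : Matrix.of μ * subgroupZeta S = 1 := by
    ext Q P
    rw [mul_apply, one_apply, ← finsum_eq_sum_of_fintype]
    exact hμζ Q P
  set R : Matrix (SubgroupClasses S) (Subgroup S) ℚ :=
    (1 : Matrix (Subgroup S) (Subgroup S) ℚ).submatrix
      (fun c : SubgroupClasses S => Quotient.out c) id
  set I : Matrix (Subgroup S) (SubgroupClasses S) ℚ :=
    (1 : Matrix (SubgroupClasses S) (SubgroupClasses S) ℚ).submatrix SubgroupClasses.mk id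
  set w : SubgroupClasses S → ℚ := fun c => ((Quotient.out c : Subgroup S).weylCard : ℚ)
  have hw : diagonal w * diagonal w⁻¹ = 1 := by
    rw [diagonal_mul_diagonal, ← diagonal_one]
    congr 1
    funext c
    exact mul_inv_cancel₀ (Nat.cast_ne_zero.mpr Nat.card_pos.ne')
  have hIRμI : I * (R * (Matrix.of μ * I)) = Matrix.of μ * I :=
    one_submatrix_mul_one_submatrix_mul (inverse_subgroupZeta_mul_classIndicator_out_mk hζμ' hμζ')
  have key : R * subgroupZeta S * I * diagonal w * (diagonal w⁻¹ * (R * (Matrix.of μ * I))) = 1 :=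
    calc R * subgroupZeta S * I * diagonal w * (diagonal w⁻¹ * (R * (Matrix.of μ * I)))
        = R * subgroupZeta S * (I * (R * (Matrix.of μ * I))) := by
          rw [Matrix.mul_assoc _ (diagonal w), ← Matrix.mul_assoc (diagonal w), hw,
            Matrix.one_mul, Matrix.mul_assoc]
      _ = R * I := by
          rw [hIRμI, Matrix.mul_assoc, ← Matrix.mul_assoc _ _ I, hζμ', Matrix.one_mul]
      _ = 1 := one_submatrix_mul_one_submatrix SubgroupClasses.mk_out
  rw [tableOfMarks_eq_factorization, mobiusClassMatrix_eq_factorization]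
  exact ⟨key, mul_eq_one_comm.mp key⟩
end

section
/- Let p be a prime and S a finite p-group with subgroups Q ≤ P. If μ(Q,P) ≠ 0, where μ is the Möbius function of the subgroup lattice of S, then P ≤ N_S(Q) and P/Q is elementary abelian. -/
open Classical
open scoped commutatorElement

/-!
Weisner's identity `∑_{x ⊔ a = P} μ(Q, x) = [a ≤ Q] μ(Q, P)` shows that `μ(Q, P) ≠ 0` forces `Q`
to contain every `a ≤ P` that lies in all maximal elements below `P`. In a finite `p`-group the
maximal subgroups are normal of index `p`, so the Frattini subgroup of `P` is such an element and
contains all commutators and `p`-th powers of `P`; hence so does `Q`.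
-/

section Moebius

variable {α : Type*} [Lattice α] [Fintype α] {μ : α → α → ℤ}

theorem sum_moebius_sup_eq
    (hζμ : ∀ Q P : α, ∑ R, (if Q ≤ R then (1 : ℤ) else 0) * μ R P = if Q = P then 1 else 0)
    (hμζ : ∀ Q P : α, ∑ R, μ Q R * (if R ≤ P then (1 : ℤ) else 0) = if Q = P then 1 else 0)
    (Q P a : α) :
    ∑ x, (if x ⊔ a = P then μ Q x else 0) = if a ≤ Q then μ Q P else 0 := by
  calc ∑ x, (if x ⊔ a = P then μ Q x else 0)
      = ∑ x, μ Q x * ∑ y, (if x ⊔ a ≤ y then (1 : ℤ) else 0) * μ y P := by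
        simp only [hζμ, mul_ite, mul_one, mul_zero]
    _ = ∑ y, (if a ≤ y then μ y P else 0) * ∑ x, μ Q x * (if x ≤ y then (1 : ℤ) else 0) := by
        simp only [Finset.mul_sum]
        rw [Finset.sum_comm]
        refine Finset.sum_congr rfl fun y _ => Finset.sum_congr rfl fun x _ => ?_
        by_cases hx : x ≤ y <;> by_cases ha : a ≤ y <;> simp [hx, ha, mul_comm]
    _ = ∑ y, (if a ≤ y then μ y P else 0) * (if Q = y then 1 else 0) := by
        simp only [hμζ]
    _ = if a ≤ Q then μ Q P else 0 := by
        simp [mul_ite]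

theorem le_of_moebius_ne_zero
    (hζμ : ∀ Q P : α, ∑ R, (if Q ≤ R then (1 : ℤ) else 0) * μ R P = if Q = P then 1 else 0)
    (hμζ : ∀ Q P : α, ∑ R, μ Q R * (if R ≤ P then (1 : ℤ) else 0) = if Q = P then 1 else 0)
    {Q P a : α} (haP : a ≤ P) (ha : ∀ x < P, x ⊔ a ≠ P) (hμ : μ Q P ≠ 0) : a ≤ Q := by
  have h := sum_moebius_sup_eq hζμ hμζ Q P a
  have hsup (x : α) (hx : x ≠ P) : x ⊔ a ≠ P := fun hxa =>
    ha x (lt_of_le_of_ne (le_sup_left.trans_eq hxa) hx) hxa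
  rw [Finset.sum_eq_single P (fun x _ hx => if_neg (hsup x hx)) (by simp),
    if_pos (sup_eq_left.2 haP)] at h
  by_contra hQ
  exact hμ (h.trans (if_neg hQ))

end Moebius

section PGroup

variable {G : Type*} [Group G] {M : Subgroup G}

theorem QuotientGroup.isSimpleGroup_of_isCoatom [M.Normal] (hM : IsCoatom M) :
    IsSimpleGroup (G ⧸ M) where
  exists_pair_ne := by
    by_contra! h
    exact hM.1 (QuotientGroup.subgroup_eq_top_of_subsingleton M ⟨h⟩)
  eq_bot_or_eq_top_of_normal H _ := by
    rw [← Subgroup.map_comap_eq_self_of_surjective (QuotientGroup.mk'_surjective M) H]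
    rcases hM.le_iff.mp (QuotientGroup.le_comap_mk' M H) with h | h <;> rw [h]
    · exact Or.inr (Subgroup.map_top_of_surjective _ (QuotientGroup.mk'_surjective M))
    · exact Or.inl (QuotientGroup.map_mk'_self M)

variable {p : ℕ} [Fact p.Prime] [Finite G]

theorem IsPGroup.normal_of_isCoatom (hG : IsPGroup p G) (hM : IsCoatom M) : M.Normal :=
  Subgroup.NormalizerCondition.normal_of_coatom M
    (Group.normalizerCondition_of_isNilpotent (h := hG.isNilpotent)) hM

theorem IsPGroup.card_quotient_eq_of_isCoatom (hG : IsPGroup p G) (hM : IsCoatom M) [M.Normal] :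
    Nat.card (G ⧸ M) = p := by
  have := QuotientGroup.isSimpleGroup_of_isCoatom hM
  have := (hG.to_quotient M).isNilpotent
  obtain ⟨k, hk⟩ := (hG.to_quotient M).exists_card_eq
  have hprime := IsSimpleGroup.prime_card (α := G ⧸ M)
  rw [hk] at hprime ⊢
  rw [((Nat.Prime.pow_eq_iff hprime).mp rfl).2, pow_one]

theorem IsPGroup.commutatorElement_mem_of_isCoatom (hG : IsPGroup p G) (hM : IsCoatom M)
    (x y : G) : ⁅x, y⁆ ∈ M := by
  have := hG.normal_of_isCoatom hM
  have := isCyclic_of_prime_card (hG.card_quotient_eq_of_isCoatom hM)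
  rw [← QuotientGroup.eq_one_iff, ← QuotientGroup.mk'_apply, map_commutatorElement,
    commutatorElement_eq_one_iff_mul_comm]
  exact IsCyclic.commGroup.mul_comm _ _

theorem IsPGroup.pow_mem_of_isCoatom (hG : IsPGroup p G) (hM : IsCoatom M) (x : G) :
    x ^ p ∈ M := by
  have := hG.normal_of_isCoatom hM
  rw [← QuotientGroup.eq_one_iff, QuotientGroup.mk_pow, ← hG.card_quotient_eq_of_isCoatom hM]
  exact pow_card_eq_one'

theorem IsPGroup.commutatorElement_mem_frattini (hG : IsPGroup p G) (x y : G) :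
    ⁅x, y⁆ ∈ frattini G := by
  simp only [frattini, Order.radical, Subgroup.mem_iInf]
  exact fun _ hM => hG.commutatorElement_mem_of_isCoatom hM x y

theorem IsPGroup.pow_mem_frattini (hG : IsPGroup p G) (x : G) : x ^ p ∈ frattini G := by
  simp only [frattini, Order.radical, Subgroup.mem_iInf]
  exact fun _ hM => hG.pow_mem_of_isCoatom hM x

end PGroup

theorem Subgroup.sup_map_frattini_ne_of_lt {G : Type*} [Group G] [Finite G] {H K : Subgroup G}
    (hKH : K < H) : K ⊔ (frattini H).map H.subtype ≠ H := by
  intro h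
  have hgen : K.subgroupOf H ⊔ frattini H = ⊤ := by
    apply Subgroup.map_injective H.subtype_injective
    rw [Subgroup.map_sup, Subgroup.subgroupOf_map_subtype, inf_eq_left.2 hKH.le, h,
      ← MonoidHom.range_eq_map, Subgroup.range_subtype]
  exact hKH.not_ge (Subgroup.subgroupOf_eq_top.mp (frattini_nongenerating hgen))

/-- Hawkes–Isaacs–Özaydın / Kratzer–Thévenaz: in a finite `p`-group `S`, if
`Q ≤ P` and the Möbius function of the subgroup lattice has `μ(Q,P) ≠ 0`, then
`P ≤ N_S(Q)` and `P/Q` is elementary abelian. -/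
theorem stmt_13 (p : ℕ) [Fact p.Prime] (S : Type*) [Group S] [Fintype S]
    (hS : IsPGroup p S)
    (μ : Subgroup S → Subgroup S → ℤ)
    (hζμ : ∀ Q P : Subgroup S,
      ∑ᶠ R : Subgroup S, (if Q ≤ R then (1 : ℤ) else 0) * μ R P
        = if Q = P then 1 else 0)
    (hμζ : ∀ Q P : Subgroup S,
      ∑ᶠ R : Subgroup S, μ Q R * (if R ≤ P then (1 : ℤ) else 0)
        = if Q = P then 1 else 0)
    (Q P : Subgroup S) (hQP : Q ≤ P) (hμ : μ Q P ≠ 0) :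
    P ≤ Subgroup.normalizer (Q : Set S)
    ∧ (∀ x ∈ P, ∀ y ∈ P, x * y * x⁻¹ * y⁻¹ ∈ Q)
    ∧ (∀ x ∈ P, x ^ p ∈ Q) := by
  simp only [finsum_eq_sum_of_fintype] at hζμ hμζ
  have hP := hS.to_subgroup P
  have hΦQ : (frattini P).map P.subtype ≤ Q :=
    le_of_moebius_ne_zero hζμ hμζ (Subgroup.map_subtype_le _)
      (fun _ hx => Subgroup.sup_map_frattini_ne_of_lt hx) hμ
  have hcomm : ∀ x ∈ P, ∀ y ∈ P, ⁅x, y⁆ ∈ Q := fun x hx y hy =>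
    hΦQ ⟨_, hP.commutatorElement_mem_frattini ⟨x, hx⟩ ⟨y, hy⟩, rfl⟩
  refine ⟨?_, hcomm, fun x hx => hΦQ ⟨_, hP.pow_mem_frattini ⟨x, hx⟩, rfl⟩⟩
  exact Subgroup.le_normalizer_iff_commutator_le_right.mpr
    (Subgroup.commutator_le.mpr fun x hx y hy => hcomm x hx y (hQP hy))
end

section
/- Let S be a finite group. For every element X of the Burnside ring A(S) and every subgroup P ≤ S, the congruence Σ_{s̄ ∈ W_S P} |X^{⟨s⟩P}| ≡ 0 (mod |W_S P|) holds, where W_S P = N_S(P)/P, the sum runs over coset representatives s of P in N_S(P), and ⟨s⟩P denotes the subgroup generated by s and P. -/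
/-!
The Weyl group `W = N_S(P)/P` acts on the `P`-fixed points `A^P`, and a class `w = sP` fixes
`a ∈ A^P` exactly when `⟨s⟩P` fixes `a`. So the sum counts the pairs `(w, a)` with `w • a = a`,
which by Burnside's lemma is `|W|` times the number of `W`-orbits on `A^P`. The virtual case
`X = [A] - [B]` follows by subtracting.
-/

open MulAction Subgroup

namespace MulAction

variable {G A : Type*} [Group G] [MulAction G A]

theorem mem_fixedPoints_iff_le_stabilizer {H : Subgroup G} {a : A} :
    a ∈ fixedPoints H A ↔ H ≤ stabilizer G a :=
  ⟨fun h g hg => h ⟨g, hg⟩, fun h g => h g.2⟩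

theorem mem_fixedPoints_sup_closure_singleton {H : Subgroup G} {g : G} {a : A} :
    a ∈ fixedPoints (↥(H ⊔ closure {g})) A ↔ a ∈ fixedPoints H A ∧ g • a = a := by
  simp only [mem_fixedPoints_iff_le_stabilizer, sup_le_iff, closure_le, Set.singleton_subset_iff,
    SetLike.mem_coe, mem_stabilizer_iff]

theorem mem_fixedPoints_subgroupOf {H K : Subgroup G} (hHK : H ≤ K) {a : A} :
    a ∈ fixedPoints (H.subgroupOf K) A ↔ a ∈ fixedPoints H A :=
  ⟨fun h g => h ⟨⟨g, hHK g.2⟩, g.2⟩, fun h g => h ⟨g.1.1, g.2⟩⟩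

variable {H K : Subgroup G} [(H.subgroupOf K).Normal]

noncomputable def fixedByQuotientEquivFixedPointsSup (hHK : H ≤ K) (q : K ⧸ H.subgroupOf K) :
    fixedBy (fixedPoints (H.subgroupOf K) A) q ≃ fixedPoints (↥(H ⊔ closure {(q.out : G)})) A :=
  (Equiv.subtypeEquivRight fun x => by
      rw [mem_fixedBy, ← quotient_out_smul_fixedPoints, Subtype.ext_iff]
      exact (and_iff_right ((mem_fixedPoints_subgroupOf hHK).1 x.2)).symm.trans
        mem_fixedPoints_sup_closure_singleton.symm).trans
    (Equiv.subtypeSubtypeEquivSubtype fun hx =>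
      (mem_fixedPoints_subgroupOf hHK).2 (mem_fixedPoints_sup_closure_singleton.1 hx).1)

theorem card_quotient_dvd_sum_card_fixedPoints_sup (hHK : H ≤ K) [Finite (K ⧸ H.subgroupOf K)]
    [Finite A] :
    (Nat.card (K ⧸ H.subgroupOf K) : ℤ) ∣
      ∑ᶠ q : K ⧸ H.subgroupOf K, (Nat.card (fixedPoints (↥(H ⊔ closure {(q.out : G)})) A) : ℤ) := by
  classical
  let W := K ⧸ H.subgroupOf K
  let X := fixedPoints (H.subgroupOf K) A
  have := Fintype.ofFinite W
  have := Fintype.ofFinite X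
  have burnside :
      ∑ q : W, Nat.card (fixedBy X q) = Nat.card (orbitRel.Quotient W X) * Nat.card W := by
    simp only [Nat.card_eq_fintype_card]
    exact sum_card_fixedBy_eq_card_orbits_mul_card_group W X
  have hsum : ∑ q : W, Nat.card (fixedPoints (↥(H ⊔ closure {(q.out : G)})) A) =
      Nat.card (orbitRel.Quotient W X) * Nat.card W :=
    burnside ▸ Finset.sum_congr rfl fun q _ =>
      Nat.card_congr (fixedByQuotientEquivFixedPointsSup hHK q).symm
  rw [finsum_eq_sum_of_fintype, ← Nat.cast_sum, hsum]
  exact Int.natCast_dvd_natCast.2 (dvd_mul_left _ _)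

end MulAction

/-- For every element `X = [A] - [B]` of the Burnside ring of a finite group `S` and
every subgroup `P ≤ S`, `Σ_{s̄ ∈ W_S P} |X^{⟨s⟩P}| ≡ 0 (mod |W_S P|)`, where
`W_S P = N_S(P)/P` and `⟨s⟩P` is the subgroup generated by a lift `s` and `P`. -/
theorem stmt_14 (S : Type*) [Group S] [Fintype S] (P : Subgroup S)
    (A B : Type*) [Fintype A] [Fintype B] [MulAction S A] [MulAction S B] :
    (Nat.card (↥(Subgroup.normalizer (P : Set S)) ⧸ P.subgroupOf (Subgroup.normalizer (P : Set S))) : ℤ) ∣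
      ∑ᶠ w : ↥(Subgroup.normalizer (P : Set S)) ⧸ P.subgroupOf (Subgroup.normalizer (P : Set S)),
        ((Nat.card (MulAction.fixedPoints
            (↥(P ⊔ Subgroup.closure {((Quotient.out w : ↥(Subgroup.normalizer (P : Set S))) : S)})) A) : ℤ)
          - (Nat.card (MulAction.fixedPoints
            (↥(P ⊔ Subgroup.closure {((Quotient.out w : ↥(Subgroup.normalizer (P : Set S))) : S)})) B) : ℤ)) := by
  rw [finsum_sub_distrib (Set.toFinite _) (Set.toFinite _)]
  exact dvd_sub (card_quotient_dvd_sum_card_fixedPoints_sup le_normalizer)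
    (card_quotient_dvd_sum_card_fixedPoints_sup le_normalizer)
end
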